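/- For first-order differential operators T(τ) = τ(t)∂_t + (1/6)(2τ'x - τ''y²)∂_x + (2τ'/3)y∂_y + (1/6)(-4τ'u + 2τ''x - τ'''y²)∂_u (the dKP symmetry generators), it holds that [T(τ₁), T(τ₂)] = T(τ₁τ₂' - τ₁'τ₂), i.e., the map τ ↦ T(τ) is a Lie algebra homomorphism from the Witt-type bracket to vector field commutators. -/

import Mathlib

/-- Partial derivative in the first variable `x` of a function of `(x, y, t, u)`. -/
noncomputable def Dx (F : ℝ → ℝ → ℝ → ℝ → ℝ) : ℝ → ℝ → ℝ → ℝ → ℝ :=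
  fun x y t u => deriv (fun x' => F x' y t u) x

/-- Partial derivative in the second variable `y`. -/
noncomputable def Dy (F : ℝ → ℝ → ℝ → ℝ → ℝ) : ℝ → ℝ → ℝ → ℝ → ℝ :=
  fun x y t u => deriv (fun y' => F x y' t u) y

/-- Partial derivative in the third variable `t`. -/
noncomputable def Dt (F : ℝ → ℝ → ℝ → ℝ → ℝ) : ℝ → ℝ → ℝ → ℝ → ℝ :=
  fun x y t u => deriv (fun t' => F x y t' u) t

/-- Partial derivative in the fourth variable `u`. -/
noncomputable def Du (F : ℝ → ℝ → ℝ → ℝ → ℝ) : ℝ → ℝ → ℝ → ℝ → ℝ :=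
  fun x y t u => deriv (fun u' => F x y t u') u

/-- The dKP symmetry generator
`T(τ) = τ ∂_t + (1/6)(2τ'x - τ''y²) ∂_x + (2τ'/3) y ∂_y + (1/6)(-4τ'u + 2τ''x - τ'''y²) ∂_u`. -/
noncomputable def TauOp (τ : ℝ → ℝ) (F : ℝ → ℝ → ℝ → ℝ → ℝ) : ℝ → ℝ → ℝ → ℝ → ℝ :=
  fun x y t u =>
    τ t * Dt F x y t u
    + (1 / 6) * (2 * deriv τ t * x - deriv (deriv τ) t * y ^ 2) * Dx F x y t u
    + (2 * deriv τ t / 3) * y * Dy F x y t u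
    + (1 / 6) * (-4 * deriv τ t * u + 2 * deriv (deriv τ) t * x
        - deriv (deriv (deriv τ)) t * y ^ 2) * Du F x y t u

namespace DKPVirasoro

noncomputable section

abbrev E4 : Type := ℝ × ℝ × ℝ × ℝ

def ee1 : E4 := (1,0,0,0)
def ee2 : E4 := (0,1,0,0)
def ee3 : E4 := (0,0,1,0)
def ee4 : E4 := (0,0,0,1)

lemma hasDerivAt_slice1 {G : E4 → ℝ} (x y t u : ℝ) (hG : DifferentiableAt ℝ G (x,y,t,u)) :
    HasDerivAt (fun x' => G (x', y, t, u)) (fderiv ℝ G (x,y,t,u) ee1) x :=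
  hG.hasFDerivAt.comp_hasDerivAt x ((hasDerivAt_id x).prodMk (hasDerivAt_const _ _))

lemma hasDerivAt_slice2 {G : E4 → ℝ} (x y t u : ℝ) (hG : DifferentiableAt ℝ G (x,y,t,u)) :
    HasDerivAt (fun y' => G (x, y', t, u)) (fderiv ℝ G (x,y,t,u) ee2) y :=
  hG.hasFDerivAt.comp_hasDerivAt y
    ((hasDerivAt_const _ _).prodMk ((hasDerivAt_id y).prodMk (hasDerivAt_const _ _)))

lemma hasDerivAt_slice3 {G : E4 → ℝ} (x y t u : ℝ) (hG : DifferentiableAt ℝ G (x,y,t,u)) :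
    HasDerivAt (fun t' => G (x, y, t', u)) (fderiv ℝ G (x,y,t,u) ee3) t :=
  hG.hasFDerivAt.comp_hasDerivAt t
    ((hasDerivAt_const _ _).prodMk ((hasDerivAt_const _ _).prodMk
      ((hasDerivAt_id t).prodMk (hasDerivAt_const _ _))))

lemma hasDerivAt_slice4 {G : E4 → ℝ} (x y t u : ℝ) (hG : DifferentiableAt ℝ G (x,y,t,u)) :
    HasDerivAt (fun u' => G (x, y, t, u')) (fderiv ℝ G (x,y,t,u) ee4) u :=
  hG.hasFDerivAt.comp_hasDerivAt u
    ((hasDerivAt_const _ _).prodMk ((hasDerivAt_const _ _).prodMk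
      ((hasDerivAt_const _ _).prodMk (hasDerivAt_id u))))

lemma fderiv_decomp {G : E4 → ℝ} (p : E4) (v : E4) :
    fderiv ℝ G p v = v.1 * fderiv ℝ G p ee1 + v.2.1 * fderiv ℝ G p ee2
      + v.2.2.1 * fderiv ℝ G p ee3 + v.2.2.2 * fderiv ℝ G p ee4 := by
  have hv : v = v.1 • ee1 + v.2.1 • ee2 + v.2.2.1 • ee3 + v.2.2.2 • ee4 := by
    simp [ee1, ee2, ee3, ee4, Prod.ext_iff]
  conv_lhs => rw [hv]
  simp [map_add, map_smul, smul_eq_mul]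

lemma smooth_dirderiv {G : E4 → ℝ} (hG : ContDiff ℝ (⊤ : ℕ∞) G) {V : E4 → E4}
    (hV : ContDiff ℝ (⊤ : ℕ∞) V) :
    ContDiff ℝ (⊤ : ℕ∞) (fun p => fderiv ℝ G p (V p)) :=
  (hG.fderiv_right (m := ((⊤:ℕ∞) : WithTop ℕ∞)) (by simp)).clm_apply hV

lemma comm_core {G : E4 → ℝ} (hG : ContDiff ℝ (⊤ : ℕ∞) G) {V W : E4 → E4}
    (hV : ContDiff ℝ (⊤ : ℕ∞) V) (hW : ContDiff ℝ (⊤ : ℕ∞) W) (p : E4) :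
    fderiv ℝ (fun q => fderiv ℝ G q (W q)) p (V p)
      - fderiv ℝ (fun q => fderiv ℝ G q (V q)) p (W p)
    = fderiv ℝ G p (fderiv ℝ W p (V p) - fderiv ℝ V p (W p)) := by
  have hdf : DifferentiableAt ℝ (fderiv ℝ G) p :=
    ((hG.fderiv_right (m := ((⊤:ℕ∞) : WithTop ℕ∞)) (by simp)).differentiable
      (by norm_cast)).differentiableAt
  have h1 := fderiv_clm_apply (𝕜 := ℝ) (c := fderiv ℝ G) (u := W) hdf
    ((hW.differentiable (by norm_cast)).differentiableAt)
  have h2 := fderiv_clm_apply (𝕜 := ℝ) (c := fderiv ℝ G) (u := V) hdf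
    ((hV.differentiable (by norm_cast)).differentiableAt)
  have hsymm : fderiv ℝ (fderiv ℝ G) p (V p) (W p) = fderiv ℝ (fderiv ℝ G) p (W p) (V p) :=
    (hG.contDiffAt.isSymmSndFDerivAt (by simp; exact WithTop.coe_le_coe.mpr (le_top : (2:ℕ∞) ≤ ⊤))) (V p) (W p)
  rw [h1, h2]
  simp only [ContinuousLinearMap.add_apply, ContinuousLinearMap.coe_comp', Function.comp_apply,
    ContinuousLinearMap.flip_apply, map_sub]
  rw [hsymm]
  ring

def Qf (c0 c1 c2 c3 c4 : ℝ → ℝ) : E4 → ℝ := fun p =>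
  c0 p.2.2.1 + c1 p.2.2.1 * p.1 + c2 p.2.2.1 * p.2.1 ^ 2
    + c3 p.2.2.1 * p.2.2.2 + c4 p.2.2.1 * p.2.1

lemma smooth_Qf {c0 c1 c2 c3 c4 : ℝ → ℝ} (h0 : ContDiff ℝ (⊤:ℕ∞) c0)
    (h1 : ContDiff ℝ (⊤:ℕ∞) c1) (h2 : ContDiff ℝ (⊤:ℕ∞) c2) (h3 : ContDiff ℝ (⊤:ℕ∞) c3)
    (h4 : ContDiff ℝ (⊤:ℕ∞) c4) : ContDiff ℝ (⊤:ℕ∞) (Qf c0 c1 c2 c3 c4) := by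
  unfold Qf
  fun_prop

lemma fderiv_Qf {c0 c1 c2 c3 c4 : ℝ → ℝ} (h0 : ContDiff ℝ (⊤:ℕ∞) c0)
    (h1 : ContDiff ℝ (⊤:ℕ∞) c1) (h2 : ContDiff ℝ (⊤:ℕ∞) c2) (h3 : ContDiff ℝ (⊤:ℕ∞) c3)
    (h4 : ContDiff ℝ (⊤:ℕ∞) c4) (x y t u : ℝ) (v : E4) :
    fderiv ℝ (Qf c0 c1 c2 c3 c4) (x,y,t,u) v
      = c1 t * v.1 + (2 * c2 t * y + c4 t) * v.2.1
        + (deriv c0 t + deriv c1 t * x + deriv c2 t * y ^ 2 + deriv c3 t * u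
            + deriv c4 t * y) * v.2.2.1
        + c3 t * v.2.2.2 := by
  have hQ : ContDiff ℝ (⊤:ℕ∞) (Qf c0 c1 c2 c3 c4) := smooth_Qf h0 h1 h2 h3 h4
  have hQd : DifferentiableAt ℝ (Qf c0 c1 c2 c3 c4) (x,y,t,u) :=
    (hQ.differentiable (by norm_cast)).differentiableAt
  have e1 : fderiv ℝ (Qf c0 c1 c2 c3 c4) (x,y,t,u) ee1 = c1 t := by
    refine HasDerivAt.unique (hasDerivAt_slice1 x y t u hQd) ?_
    have : HasDerivAt (fun x' : ℝ => c0 t + c1 t * x' + c2 t * y ^ 2 + c3 t * u + c4 t * y)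
        (0 + c1 t * 1 + 0 + 0 + 0) x :=
      ((((hasDerivAt_const x (c0 t)).add ((hasDerivAt_id x).const_mul (c1 t))).add
        (hasDerivAt_const x _)).add (hasDerivAt_const x _)).add (hasDerivAt_const x _)
    exact this.congr_deriv (by simp)
  have e2 : fderiv ℝ (Qf c0 c1 c2 c3 c4) (x,y,t,u) ee2 = 2 * c2 t * y + c4 t := by
    refine HasDerivAt.unique (hasDerivAt_slice2 x y t u hQd) ?_
    have h' : HasDerivAt (fun y' : ℝ => c0 t + c1 t * x + c2 t * y' ^ 2 + c3 t * u + c4 t * y')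
        (0 + 0 + c2 t * (2 * y ^ 1 * 1) + 0 + c4 t * 1) y :=
      ((((hasDerivAt_const y (c0 t)).add (hasDerivAt_const y _)).add
        (((hasDerivAt_id y).pow 2).const_mul (c2 t))).add (hasDerivAt_const y _)).add
        ((hasDerivAt_id y).const_mul (c4 t))
    exact h'.congr_deriv (by ring)
  have e3 : fderiv ℝ (Qf c0 c1 c2 c3 c4) (x,y,t,u) ee3
      = deriv c0 t + deriv c1 t * x + deriv c2 t * y ^ 2 + deriv c3 t * u + deriv c4 t * y := by
    refine HasDerivAt.unique (hasDerivAt_slice3 x y t u hQd) ?_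
    have d0 : HasDerivAt c0 (deriv c0 t) t := ((h0.differentiable (by norm_cast)) t).hasDerivAt
    have d1 : HasDerivAt c1 (deriv c1 t) t := ((h1.differentiable (by norm_cast)) t).hasDerivAt
    have d2 : HasDerivAt c2 (deriv c2 t) t := ((h2.differentiable (by norm_cast)) t).hasDerivAt
    have d3 : HasDerivAt c3 (deriv c3 t) t := ((h3.differentiable (by norm_cast)) t).hasDerivAt
    have d4 : HasDerivAt c4 (deriv c4 t) t := ((h4.differentiable (by norm_cast)) t).hasDerivAt
    exact (((d0.add (d1.mul_const x)).add (d2.mul_const (y ^ 2))).add (d3.mul_const u)).add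
      (d4.mul_const y)
  have e4 : fderiv ℝ (Qf c0 c1 c2 c3 c4) (x,y,t,u) ee4 = c3 t := by
    refine HasDerivAt.unique (hasDerivAt_slice4 x y t u hQd) ?_
    have : HasDerivAt (fun u' : ℝ => c0 t + c1 t * x + c2 t * y ^ 2 + c3 t * u' + c4 t * y)
        (0 + 0 + 0 + c3 t * 1 + 0) u :=
      ((((hasDerivAt_const u (c0 t)).add (hasDerivAt_const u _)).add
        (hasDerivAt_const u _)).add ((hasDerivAt_id u).const_mul (c3 t))).add
        (hasDerivAt_const u _)
    exact this.congr_deriv (by simp)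
  rw [fderiv_decomp, e1, e2, e3, e4]
  ring

def zf : ℝ → ℝ := fun _ => 0

def Vc1 (τ : ℝ → ℝ) : E4 → ℝ :=
  Qf zf (fun s => (1/3) * deriv τ s) (fun s => (-1/6) * deriv (deriv τ) s) zf zf
def Vc2 (τ : ℝ → ℝ) : E4 → ℝ := Qf zf zf zf zf (fun s => (2/3) * deriv τ s)
def Vc3 (τ : ℝ → ℝ) : E4 → ℝ := Qf τ zf zf zf zf
def Vc4 (τ : ℝ → ℝ) : E4 → ℝ :=
  Qf zf (fun s => (1/3) * deriv (deriv τ) s) (fun s => (-1/6) * deriv (deriv (deriv τ)) s)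
    (fun s => (-2/3) * deriv τ s) zf

def Vf (τ : ℝ → ℝ) : E4 → E4 := fun q => (Vc1 τ q, Vc2 τ q, Vc3 τ q, Vc4 τ q)

lemma deriv_zf : deriv zf = fun _ => (0:ℝ) := by
  unfold zf; simp

lemma smooth_zf : ContDiff ℝ (⊤:ℕ∞) zf := contDiff_const

lemma smooth_deriv {τ : ℝ → ℝ} (h : ContDiff ℝ (⊤:ℕ∞) τ) : ContDiff ℝ (⊤:ℕ∞) (deriv τ) :=
  (contDiff_infty_iff_deriv.mp h).2

lemma dAt {τ : ℝ → ℝ} (h : ContDiff ℝ (⊤:ℕ∞) τ) (s : ℝ) : HasDerivAt τ (deriv τ s) s :=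
  ((h.differentiable (by norm_cast)) s).hasDerivAt

lemma smooth_Vc1 {τ : ℝ → ℝ} (h : ContDiff ℝ (⊤:ℕ∞) τ) : ContDiff ℝ (⊤:ℕ∞) (Vc1 τ) :=
  smooth_Qf smooth_zf (contDiff_const.mul (smooth_deriv h))
    (contDiff_const.mul (smooth_deriv (smooth_deriv h))) smooth_zf smooth_zf

lemma smooth_Vc2 {τ : ℝ → ℝ} (h : ContDiff ℝ (⊤:ℕ∞) τ) : ContDiff ℝ (⊤:ℕ∞) (Vc2 τ) :=
  smooth_Qf smooth_zf smooth_zf smooth_zf smooth_zf (contDiff_const.mul (smooth_deriv h))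

lemma smooth_Vc3 {τ : ℝ → ℝ} (h : ContDiff ℝ (⊤:ℕ∞) τ) : ContDiff ℝ (⊤:ℕ∞) (Vc3 τ) :=
  smooth_Qf h smooth_zf smooth_zf smooth_zf smooth_zf

lemma smooth_Vc4 {τ : ℝ → ℝ} (h : ContDiff ℝ (⊤:ℕ∞) τ) : ContDiff ℝ (⊤:ℕ∞) (Vc4 τ) :=
  smooth_Qf smooth_zf (contDiff_const.mul (smooth_deriv (smooth_deriv h)))
    (contDiff_const.mul (smooth_deriv (smooth_deriv (smooth_deriv h))))
    (contDiff_const.mul (smooth_deriv h)) smooth_zf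

lemma smooth_Vf {τ : ℝ → ℝ} (h : ContDiff ℝ (⊤:ℕ∞) τ) : ContDiff ℝ (⊤:ℕ∞) (Vf τ) :=
  (smooth_Vc1 h).prodMk ((smooth_Vc2 h).prodMk ((smooth_Vc3 h).prodMk (smooth_Vc4 h)))

lemma fderiv_prod4 {a b c d : E4 → ℝ} (p : E4) (ha : DifferentiableAt ℝ a p)
    (hb : DifferentiableAt ℝ b p) (hc : DifferentiableAt ℝ c p) (hd : DifferentiableAt ℝ d p)
    (w : E4) :
    fderiv ℝ (fun q => (a q, b q, c q, d q)) p w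
      = (fderiv ℝ a p w, fderiv ℝ b p w, fderiv ℝ c p w, fderiv ℝ d p w) := by
  rw [(ha.hasFDerivAt.prodMk (hb.hasFDerivAt.prodMk (hc.hasFDerivAt.prodMk hd.hasFDerivAt))).fderiv]
  rfl

lemma diffAt_of_smooth {g : E4 → ℝ} (h : ContDiff ℝ (⊤:ℕ∞) g) (p : E4) :
    DifferentiableAt ℝ g p := (h.differentiable (by norm_cast)).differentiableAt

/-- The bridge: `TauOp` in curried form equals the directional derivative along `Vf τ`. -/
lemma bridge (τ : ℝ → ℝ) (F : ℝ → ℝ → ℝ → ℝ → ℝ)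
    (hF : ContDiff ℝ (⊤:ℕ∞) (fun p : E4 => F p.1 p.2.1 p.2.2.1 p.2.2.2)) (x y t u : ℝ) :
    TauOp τ F x y t u
      = fderiv ℝ (fun p : E4 => F p.1 p.2.1 p.2.2.1 p.2.2.2) (x,y,t,u) (Vf τ (x,y,t,u)) := by
  have hPd : DifferentiableAt ℝ (fun p : E4 => F p.1 p.2.1 p.2.2.1 p.2.2.2) (x,y,t,u) :=
    (hF.differentiable (by norm_cast)).differentiableAt
  have g1 : Dx F x y t u
      = fderiv ℝ (fun p : E4 => F p.1 p.2.1 p.2.2.1 p.2.2.2) (x,y,t,u) ee1 :=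
    (hasDerivAt_slice1 x y t u hPd).deriv
  have g2 : Dy F x y t u
      = fderiv ℝ (fun p : E4 => F p.1 p.2.1 p.2.2.1 p.2.2.2) (x,y,t,u) ee2 :=
    (hasDerivAt_slice2 x y t u hPd).deriv
  have g3 : Dt F x y t u
      = fderiv ℝ (fun p : E4 => F p.1 p.2.1 p.2.2.1 p.2.2.2) (x,y,t,u) ee3 :=
    (hasDerivAt_slice3 x y t u hPd).deriv
  have g4 : Du F x y t u
      = fderiv ℝ (fun p : E4 => F p.1 p.2.1 p.2.2.1 p.2.2.2) (x,y,t,u) ee4 :=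
    (hasDerivAt_slice4 x y t u hPd).deriv
  rw [TauOp, g1, g2, g3, g4]
  conv_rhs => rw [fderiv_decomp]
  simp only [Vf, Vc1, Vc2, Vc3, Vc4, Qf, zf, ee1, ee2, ee3, ee4]
  ring

lemma bracket_vf {τ₁ τ₂ : ℝ → ℝ} (h₁ : ContDiff ℝ (⊤:ℕ∞) τ₁) (h₂ : ContDiff ℝ (⊤:ℕ∞) τ₂)
    (x y t u : ℝ) :
    fderiv ℝ (Vf τ₂) (x,y,t,u) (Vf τ₁ (x,y,t,u)) - fderiv ℝ (Vf τ₁) (x,y,t,u) (Vf τ₂ (x,y,t,u))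
      = Vf (fun s => τ₁ s * deriv τ₂ s - deriv τ₁ s * τ₂ s) (x,y,t,u) := by
  have s1 := smooth_deriv h₁
  have s11 := smooth_deriv s1
  have s111 := smooth_deriv s11
  have s2 := smooth_deriv h₂
  have s22 := smooth_deriv s2
  have s222 := smooth_deriv s22
  have e1 : deriv (fun s => τ₁ s * deriv τ₂ s - deriv τ₁ s * τ₂ s)
      = fun s => τ₁ s * deriv (deriv τ₂) s - deriv (deriv τ₁) s * τ₂ s := by
    funext s
    refine (((dAt h₁ s).mul (dAt s2 s)).sub ((dAt s1 s).mul (dAt h₂ s))).deriv.trans ?_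
    ring
  have e2 : deriv (deriv (fun s => τ₁ s * deriv τ₂ s - deriv τ₁ s * τ₂ s))
      = fun s => τ₁ s * deriv (deriv (deriv τ₂)) s + deriv τ₁ s * deriv (deriv τ₂) s
          - deriv (deriv τ₁) s * deriv τ₂ s - deriv (deriv (deriv τ₁)) s * τ₂ s := by
    rw [e1]
    funext s
    refine (((dAt h₁ s).mul (dAt s22 s)).sub ((dAt s11 s).mul (dAt h₂ s))).deriv.trans ?_
    ring
  have e3 : deriv (deriv (deriv (fun s => τ₁ s * deriv τ₂ s - deriv τ₁ s * τ₂ s))) t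
      = τ₁ t * deriv (deriv (deriv (deriv τ₂))) t
          + 2 * deriv τ₁ t * deriv (deriv (deriv τ₂)) t
          - 2 * deriv (deriv (deriv τ₁)) t * deriv τ₂ t
          - deriv (deriv (deriv (deriv τ₁))) t * τ₂ t := by
    rw [e2]
    refine (((((dAt h₁ t).mul (dAt s222 t)).add ((dAt s1 t).mul (dAt s22 t))).sub
      ((dAt s11 t).mul (dAt s2 t))).sub ((dAt s111 t).mul (dAt h₂ t))).deriv.trans ?_
    ring
  have d1₁ := diffAt_of_smooth (smooth_Vc1 h₁) (x,y,t,u)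
  have d2₁ := diffAt_of_smooth (smooth_Vc2 h₁) (x,y,t,u)
  have d3₁ := diffAt_of_smooth (smooth_Vc3 h₁) (x,y,t,u)
  have d4₁ := diffAt_of_smooth (smooth_Vc4 h₁) (x,y,t,u)
  have d1₂ := diffAt_of_smooth (smooth_Vc1 h₂) (x,y,t,u)
  have d2₂ := diffAt_of_smooth (smooth_Vc2 h₂) (x,y,t,u)
  have d3₂ := diffAt_of_smooth (smooth_Vc3 h₂) (x,y,t,u)
  have d4₂ := diffAt_of_smooth (smooth_Vc4 h₂) (x,y,t,u)
  unfold Vf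
  rw [fderiv_prod4 _ d1₂ d2₂ d3₂ d4₂, fderiv_prod4 _ d1₁ d2₁ d3₁ d4₁]
  simp only [Vc1, Vc2, Vc3, Vc4]
  rw [fderiv_Qf smooth_zf (contDiff_const.mul s2) (contDiff_const.mul s22) smooth_zf smooth_zf,
    fderiv_Qf smooth_zf smooth_zf smooth_zf smooth_zf (contDiff_const.mul s2),
    fderiv_Qf h₂ smooth_zf smooth_zf smooth_zf smooth_zf,
    fderiv_Qf smooth_zf (contDiff_const.mul s22) (contDiff_const.mul s222)
      (contDiff_const.mul s2) smooth_zf,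
    fderiv_Qf smooth_zf (contDiff_const.mul s1) (contDiff_const.mul s11) smooth_zf smooth_zf,
    fderiv_Qf smooth_zf smooth_zf smooth_zf smooth_zf (contDiff_const.mul s1),
    fderiv_Qf h₁ smooth_zf smooth_zf smooth_zf smooth_zf,
    fderiv_Qf smooth_zf (contDiff_const.mul s11) (contDiff_const.mul s111)
      (contDiff_const.mul s1) smooth_zf]
  simp only [Qf, zf, deriv_zf, deriv_const_mul_field', deriv_const', Prod.mk_sub_mk, Prod.mk.injEq]
  rw [e3, e2, e1]
  refine ⟨by ring, by ring, by ring, by ring⟩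

end

end DKPVirasoro

open DKPVirasoro in
/-- Virasoro-type commutation relation for the dKP generators:
`[T(τ₁), T(τ₂)] = T(τ₁ τ₂' - τ₁' τ₂)`. -/
theorem dKP_virasoro_commutation (τ₁ τ₂ : ℝ → ℝ)
    (hτ₁ : ContDiff ℝ (⊤ : ℕ∞) τ₁) (hτ₂ : ContDiff ℝ (⊤ : ℕ∞) τ₂)
    (F : ℝ → ℝ → ℝ → ℝ → ℝ)
    (hF : ContDiff ℝ (⊤ : ℕ∞) (fun p : ℝ × ℝ × ℝ × ℝ => F p.1 p.2.1 p.2.2.1 p.2.2.2)) :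
    ∀ x y t u, TauOp τ₁ (TauOp τ₂ F) x y t u - TauOp τ₂ (TauOp τ₁ F) x y t u
      = TauOp (fun s => τ₁ s * deriv τ₂ s - deriv τ₁ s * τ₂ s) F x y t u := by
  intro x y t u
  have hτ₁' : ContDiff ℝ (⊤:ℕ∞) τ₁ := hτ₁.of_le (by simp)
  have hτ₂' : ContDiff ℝ (⊤:ℕ∞) τ₂ := hτ₂.of_le (by simp)
  have hF' : ContDiff ℝ (⊤:ℕ∞) (fun p : E4 => F p.1 p.2.1 p.2.2.1 p.2.2.2) := hF.of_le (by simp)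
  have hV1 := smooth_Vf hτ₁'
  have hV2 := smooth_Vf hτ₂'
  have key₂ : (fun p : E4 => TauOp τ₂ F p.1 p.2.1 p.2.2.1 p.2.2.2)
      = fun q => fderiv ℝ (fun p : E4 => F p.1 p.2.1 p.2.2.1 p.2.2.2) q (Vf τ₂ q) := by
    funext q; obtain ⟨a, b, c, d⟩ := q; exact bridge τ₂ F hF' a b c d
  have key₁ : (fun p : E4 => TauOp τ₁ F p.1 p.2.1 p.2.2.1 p.2.2.2)
      = fun q => fderiv ℝ (fun p : E4 => F p.1 p.2.1 p.2.2.1 p.2.2.2) q (Vf τ₁ q) := by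
    funext q; obtain ⟨a, b, c, d⟩ := q; exact bridge τ₁ F hF' a b c d
  have hG₂ : ContDiff ℝ (⊤:ℕ∞) (fun p : E4 => TauOp τ₂ F p.1 p.2.1 p.2.2.1 p.2.2.2) := by
    rw [key₂]; exact smooth_dirderiv hF' hV2
  have hG₁ : ContDiff ℝ (⊤:ℕ∞) (fun p : E4 => TauOp τ₁ F p.1 p.2.1 p.2.2.1 p.2.2.2) := by
    rw [key₁]; exact smooth_dirderiv hF' hV1
  rw [bridge τ₁ (TauOp τ₂ F) hG₂ x y t u, bridge τ₂ (TauOp τ₁ F) hG₁ x y t u, key₂, key₁,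
    bridge (fun s => τ₁ s * deriv τ₂ s - deriv τ₁ s * τ₂ s) F hF' x y t u,
    comm_core hF' hV1 hV2 (x, y, t, u), bracket_vf hτ₁' hτ₂' x y t u]
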